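/- For all positive integers s and t with gcd(s,t) ≠ 1, wsat(s+t, K_{s,t}) ≥ C(s+t-1, 2) + 1. -/

import Mathlib

open SimpleGraph

section WSatDefs

variable {α β : Type*}

/-- `G` contains a copy of `F` as a subgraph. -/
def HasCopy (F : SimpleGraph α) (G : SimpleGraph β) : Prop :=
  ∃ f : α ↪ β, ∀ a b, F.Adj a b → G.Adj (f a) (f b)

/-- `G` contains a copy of `F` using the edge `e`. -/
def CopyAt (F : SimpleGraph α) (G : SimpleGraph β) (e : Sym2 β) : Prop :=
  ∃ f : α ↪ β, (∀ a b, F.Adj a b → G.Adj (f a) (f b)) ∧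
    ∃ a b, F.Adj a b ∧ s(f a, f b) = e

/-- One step of a weakly `F`-saturation process: add one missing edge, creating a
new copy of `F` containing that edge. -/
def SatStep (F : SimpleGraph α) (H H' : SimpleGraph β) : Prop :=
  ∃ e ∈ Hᶜ.edgeSet, H' = H ⊔ SimpleGraph.fromEdgeSet {e} ∧ CopyAt F H' e

/-- `H'` is reachable from `H` by a weakly `F`-saturation process. -/
def SatReaches (F : SimpleGraph α) : SimpleGraph β → SimpleGraph β → Prop :=
  Relation.ReflTransGen (SatStep F)

/-- `G` is weakly `F`-saturated: `F`-free, and the missing edges can be added one at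
a time, each creating a new copy of `F` containing it, until the complete graph. -/
def WeaklySat (F : SimpleGraph α) (G : SimpleGraph β) : Prop :=
  ¬ HasCopy F G ∧ SatReaches F G ⊤

/-- The weak saturation number: minimum number of edges of a weakly `F`-saturated
graph on `n` vertices. -/
noncomputable def wsat (n : ℕ) (F : SimpleGraph α) : ℕ :=
  sInf {m | ∃ G : SimpleGraph (Fin n), WeaklySat F G ∧ G.edgeSet.ncard = m}

/-- The complete bipartite graph `K_{s,t}`. -/
def Kst (s t : ℕ) : SimpleGraph (Fin s ⊕ Fin t) :=
  completeBipartiteGraph (Fin s) (Fin t)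

end WSatDefs


/-!
Let `p` be a prime dividing `s` and `t`, and work in `(ZMod p)^V` with `|V| = s + t`. A step of
a saturation process adding the edge `uv` creates a copy of `K_{s,t}` spanning all of `V`. The
indicator `x` of its `s`-side has coordinate sum `s = 0`, separates `u` from `v`, and every pair it
separates is already an edge; so `x` takes equal values at the ends of every edge added later.
Hence the indicators of the `m` steps, preceded by the all-ones vector (coordinate sum
`s + t = 0`), are triangular with respect to the functionals `e_u - e_v` of the added edges: they
are `m + 1` linearly independent vectors in the hyperplane `∑ = 0`, so `m ≤ s + t - 2`.
-/

open Finset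

theorem linearIndependent_of_triangular {ι R M : Type*} [LinearOrder ι] [CommRing R]
    [NoZeroDivisors R] [AddCommGroup M] [Module R M] (x : ι → M) (φ : ι → M →ₗ[R] R)
    (hdiag : ∀ i, φ i (x i) ≠ 0) (htri : ∀ i j, i < j → φ j (x i) = 0) :
    LinearIndependent R x := by
  classical
  rw [linearIndependent_iff']
  intro s g hg i hi
  by_contra hgi
  set S := s.filter (g · ≠ 0)
  have hS : S.Nonempty := ⟨i, mem_filter.2 ⟨hi, hgi⟩⟩
  set m := S.max' hS
  obtain ⟨hms, hgm⟩ := mem_filter.1 (S.max'_mem hS)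
  have hφ : ∑ j ∈ s, g j * φ m (x j) = g m * φ m (x m) := by
    refine sum_eq_single_of_mem m hms fun j hjs hjm => ?_
    rcases lt_or_gt_of_ne hjm with hlt | hgt
    · rw [htri j m hlt, mul_zero]
    · have : g j = 0 := by
        by_contra hgj
        exact (S.le_max' j (mem_filter.2 ⟨hjs, hgj⟩)).not_gt hgt
      rw [this, zero_mul]
  have := congrArg (φ m) hg
  simp only [map_sum, map_smul, smul_eq_mul, map_zero, hφ] at this
  exact mul_ne_zero hgm (hdiag m) this

theorem LinearIndependent.card_lt_finrank_of_forall_mem {ι K V : Type*} [Fintype ι]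
    [DivisionRing K] [AddCommGroup V] [Module K V] [FiniteDimensional K V] {x : ι → V}
    (hx : LinearIndependent K x) {W : Submodule K V} (hW : W ≠ ⊤) (hxW : ∀ i, x i ∈ W) :
    Fintype.card ι < Module.finrank K V :=
  calc Fintype.card ι ≤ Module.finrank K W :=
        (hx.of_comp (f := W.subtype) (v := fun i => (⟨x i, hxW i⟩ : W))).fintype_card_le_finrank
    _ < Module.finrank K V := Submodule.finrank_lt hW

theorem SimpleGraph.ncard_edgeSet_top {V : Type*} [Fintype V] :
    (⊤ : SimpleGraph V).edgeSet.ncard = (Fintype.card V).choose 2 := by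
  classical
  rw [Set.ncard_eq_toFinset_card', ← card_edgeFinset_top_eq_card_choose_two]
  rfl

section Saturation

variable {α β : Type*} {F : SimpleGraph α}

theorem SatStep.ncard_edgeSet [Finite β] {G G' : SimpleGraph β} (h : SatStep F G G') :
    G'.edgeSet.ncard = G.edgeSet.ncard + 1 := by
  obtain ⟨e, he, rfl, -⟩ := h
  induction e using Sym2.ind with | _ u v => ?_
  obtain ⟨huv, hnadj⟩ := (compl_adj G u v).1 he
  rw [← edge, edgeSet_sup, edgeSet_edge_of_ne huv, Set.union_singleton,
    Set.ncard_insert_of_notMem (a := s(u, v)) (s := G.edgeSet) hnadj]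

theorem SatStep.le {G G' : SimpleGraph β} (h : SatStep F G G') : G ≤ G' := by
  obtain ⟨e, -, rfl, -⟩ := h
  exact le_sup_left

theorem satStep_deleteEdges {G : SimpleGraph β} {f : α ↪ β}
    (hf : ∀ a b, F.Adj a b → G.Adj (f a) (f b)) {a b : α} (hab : F.Adj a b) :
    SatStep F (G.deleteEdges {s(f a, f b)}) G := by
  have hadj := hf a b hab
  refine ⟨s(f a, f b), ?_, ?_, f, hf, a, b, hab, rfl⟩
  · simp [hadj.ne]
  · rw [deleteEdges, sdiff_sup_self]
    exact (G.sup_edge_of_adj hadj).symm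

theorem exists_weaklySat [Finite β] (hF : ∃ a b, F.Adj a b) :
    ∃ G : SimpleGraph β, WeaklySat F G := by
  obtain ⟨G, hG, hmin⟩ := Set.exists_min_image {G : SimpleGraph β | SatReaches F G ⊤}
    (fun G => G.edgeSet.ncard) (Set.toFinite _) ⟨⊤, .refl⟩
  refine ⟨G, fun ⟨f, hf⟩ => ?_, hG⟩
  obtain ⟨a, b, hab⟩ := hF
  have hstep := satStep_deleteEdges hf hab
  have := hmin _ (Relation.ReflTransGen.head hstep hG)
  have := hstep.ncard_edgeSet
  omega

theorem le_wsat {n b : ℕ} (hex : ∃ G : SimpleGraph (Fin n), WeaklySat F G)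
    (hb : ∀ G : SimpleGraph (Fin n), WeaklySat F G → b ≤ G.edgeSet.ncard) : b ≤ wsat n F := by
  obtain ⟨G, hG⟩ := hex
  exact le_csInf ⟨_, G, hG, rfl⟩ fun m ⟨G, hG, hm⟩ => hm ▸ hb G hG

end Saturation

section CompleteBipartite

variable {K V : Type*} [Field K] [Fintype V] {s t : ℕ}

theorem kst_adj_iff_elim_ne {c d : Fin s ⊕ Fin t} :
    (Kst s t).Adj c d ↔
      Sum.elim (1 : Fin s → K) (0 : Fin t → K) c ≠ Sum.elim (1 : Fin s → K) (0 : Fin t → K) d := by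
  rcases c with c | c <;> rcases d with d | d <;> simp [Kst]

theorem SatStep.exists_cut_kst (hV : Fintype.card V = s + t) {G G' : SimpleGraph V}
    (h : SatStep (Kst s t) G G') :
    ∃ (x : V → K) (u v : V), ¬ G.Adj u v ∧ x u ≠ x v ∧ ∑ w, x w = s ∧
      ∀ a b, x a ≠ x b → G'.Adj a b := by
  obtain ⟨e, he, -, f, hf, a, b, hab, rfl⟩ := h
  let g := Equiv.ofBijective f
    ((Fintype.bijective_iff_injective_and_card f).2 ⟨f.injective, by simp [hV]⟩)
  let side : Fin s ⊕ Fin t → K := Sum.elim 1 0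
  have hside : ∀ c, side (g.symm (f c)) = side c := fun c => congrArg side (g.symm_apply_apply c)
  refine ⟨side ∘ g.symm, f a, f b, ((compl_adj G _ _).1 he).2, ?_, ?_, fun a' b' h => ?_⟩
  · simpa only [Function.comp_apply, hside] using (kst_adj_iff_elim_ne (K := K)).1 hab
  · simp [Equiv.sum_comp g.symm side, side]
  · rw [← g.apply_symm_apply a', ← g.apply_symm_apply b']
    exact hf _ _ ((kst_adj_iff_elim_ne (K := K)).2 h)

theorem SatReaches.exists_triangular_cuts [Nonempty V] (hV : Fintype.card V = s + t)
    (hs : (s : K) = 0) (ht : (t : K) = 0) {H G : SimpleGraph V} (h : SatReaches (Kst s t) H G) :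
    ∃ (m : ℕ) (x : Fin (m + 1) → V → K) (φ : Fin (m + 1) → (V → K) →ₗ[K] K),
      G.edgeSet.ncard = H.edgeSet.ncard + m ∧ (∀ i, ∑ w, x i w = 0) ∧
      (∀ i, φ i (x i) ≠ 0) ∧ (∀ i j, i < j → φ j (x i) = 0) ∧
      ∀ i a b, x i a ≠ x i b → G.Adj a b := by
  induction h with
  | refl =>
    obtain ⟨w⟩ := ‹Nonempty V›
    refine ⟨0, fun _ => 1, fun _ => LinearMap.proj w, rfl, fun _ => ?_, fun _ => by simp,
      fun i j hij => by omega, fun _ _ _ h => absurd rfl h⟩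
    simp [hV, hs, ht]
  | tail _ hstep ih =>
    obtain ⟨m, x, φ, hcard, hsum, hdiag, htri, hcut⟩ := ih
    obtain ⟨y, u, v, huv, hyuv, hysum, hycut⟩ := SatStep.exists_cut_kst (K := K) hV hstep
    refine ⟨m + 1, Fin.snoc x y, Fin.snoc φ ((LinearMap.proj u : (V → K) →ₗ[K] K) - LinearMap.proj v),
      by rw [SatStep.ncard_edgeSet hstep, hcard, add_assoc], ?_, ?_, ?_, ?_⟩
    · exact Fin.lastCases (by simpa [hs] using hysum) (by simpa using hsum)
    · exact Fin.lastCases (by simpa [sub_eq_zero] using hyuv) (by simpa using hdiag)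
    · intro i j hij
      induction j using Fin.lastCases with
      | last =>
        obtain ⟨i, rfl⟩ := Fin.exists_castSucc_eq.2 hij.ne
        simpa [sub_eq_zero] using not_imp_comm.1 (hcut i u v) huv
      | cast j =>
        obtain ⟨i, rfl⟩ := Fin.exists_castSucc_eq.2 (hij.trans (Fin.castSucc_lt_last j)).ne
        simpa using htri i j (Fin.castSucc_lt_castSucc_iff.1 hij)
    · intro i a b hab
      induction i using Fin.lastCases with
      | last => exact hycut a b (by simpa using hab)
      | cast i => exact SatStep.le hstep (hcut i a b (by simpa using hab))

theorem choose_two_add_one_le_ncard_of_satReaches_top [Nonempty V]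
    (hV : Fintype.card V = s + t) (hs : (s : K) = 0) (ht : (t : K) = 0) {G : SimpleGraph V}
    (h : SatReaches (Kst s t) G ⊤) : (s + t - 1).choose 2 + 1 ≤ G.edgeSet.ncard := by
  obtain ⟨m, x, φ, hcard, hsum, hdiag, htri, -⟩ := h.exists_triangular_cuts hV hs ht
  let σ : (V → K) →ₗ[K] K := ∑ w, LinearMap.proj w
  have hσ : LinearMap.ker σ ≠ ⊤ := by
    classical
    obtain ⟨w⟩ := ‹Nonempty V›
    rw [Ne, LinearMap.ker_eq_top]
    intro hσ0
    simpa [σ] using LinearMap.congr_fun hσ0 (Pi.single w 1)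
  have hm : m + 1 < s + t := by
    simpa [hV] using (linearIndependent_of_triangular x φ hdiag htri).card_lt_finrank_of_forall_mem
      hσ (by simpa [σ] using hsum)
  have hchoose : (s + t).choose 2 = (s + t - 1).choose 2 + (s + t - 1) := by
    obtain ⟨n, hn⟩ : ∃ n, s + t = n + 1 := ⟨s + t - 1, by omega⟩
    rw [hn, Nat.choose_succ_succ', Nat.choose_one_right, Nat.add_sub_cancel, add_comm]
  rw [ncard_edgeSet_top, hV] at hcard
  omega

end CompleteBipartite

theorem wsat_lower_bound_gcd_ne_one (s t : ℕ) (hs : 0 < s) (ht : 0 < t)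
    (hgcd : Nat.gcd s t ≠ 1) :
    (s + t - 1).choose 2 + 1 ≤ wsat (s + t) (Kst s t) ∧
    ∀ G : SimpleGraph (Fin (s + t)), WeaklySat (Kst s t) G →
      (s + t - 1).choose 2 + 1 ≤ G.edgeSet.ncard := by
  obtain ⟨p, hp, hpgcd⟩ := Nat.exists_prime_and_dvd hgcd
  have : Fact p.Prime := ⟨hp⟩
  have hsp : (s : ZMod p) = 0 :=
    (ZMod.natCast_eq_zero_iff s p).2 (hpgcd.trans (Nat.gcd_dvd_left s t))
  have htp : (t : ZMod p) = 0 :=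
    (ZMod.natCast_eq_zero_iff t p).2 (hpgcd.trans (Nat.gcd_dvd_right s t))
  have : Nonempty (Fin (s + t)) := ⟨⟨0, by omega⟩⟩
  have hbound (G : SimpleGraph (Fin (s + t))) (hG : WeaklySat (Kst s t) G) :
      (s + t - 1).choose 2 + 1 ≤ G.edgeSet.ncard :=
    choose_two_add_one_le_ncard_of_satReaches_top (Fintype.card_fin _) hsp htp hG.2
  have hKst : ∃ a b, (Kst s t).Adj a b := ⟨.inl ⟨0, hs⟩, .inr ⟨0, ht⟩, by simp [Kst]⟩
  exact ⟨le_wsat (exists_weaklySat hKst) hbound, hbound⟩
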